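/- Let $t > 0$ be a real number and let $G$ be a $(P_4 \cup P_1)$-free graph on $n$ vertices with a cutset $S$ such that $G-S$ has exactly two components $D_1$ and $D_2$, each of order at least $\frac{2n}{t+1}$, and every vertex of $S$ has a neighbor in $D_1$ and a neighbor in $D_2$. Let $S_0 = \{x \in S : |N_G(x) \cap (V(D_1) \cup V(D_2))| < \frac{n}{t+1}\}$. Then for any two distinct vertices $x, y \in S_0$, either $N_G(x) \cap V(D_1) \subseteq N_G(y) \cap V(D_1)$ or $N_G(y) \cap V(D_1) \subseteq N_G(x) \cap V(D_1)$. -/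

import Mathlib

open SimpleGraph

/-- The number of connected components of `G - S`. -/
noncomputable def ncomps {V : Type*} (G : SimpleGraph V) (S : Set V) : ℕ :=
  Nat.card (G.induce Sᶜ).ConnectedComponent

/-- The graph `P₄ ∪ P₁`: a path on four vertices plus an isolated vertex. -/
def P4P1 : SimpleGraph (Fin 5) :=
  SimpleGraph.fromEdgeSet {s((0 : Fin 5), (1 : Fin 5)), s((1 : Fin 5), (2 : Fin 5)),
    s((2 : Fin 5), (3 : Fin 5))}

/-- `G` has no induced subgraph isomorphic to `P₄ ∪ P₁`. -/
def P4P1Free {V : Type*} (G : SimpleGraph V) : Prop := IsEmpty (P4P1 ↪g G)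

/-- `G` has no induced subgraph isomorphic to `P₄`. -/
def P4Free {V : Type*} (G : SimpleGraph V) : Prop := IsEmpty (SimpleGraph.pathGraph 4 ↪g G)

/-- `G` is `t`-tough. -/
def Tough {V : Type*} (t : ℝ) (G : SimpleGraph V) : Prop :=
  ∀ S : Set V, 2 ≤ ncomps G S → t * (ncomps G S : ℝ) ≤ (S.ncard : ℝ)

/-- `S` is a cutset of `G`, i.e. `G - S` is disconnected. -/
def IsCutset {V : Type*} (G : SimpleGraph V) (S : Set V) : Prop :=
  2 ≤ ncomps G S

/-- `S` is a scattering set of `G`. -/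
def IsScatSet {V : Type*} (G : SimpleGraph V) (S : Set V) : Prop :=
  2 ≤ ncomps G S ∧ ∀ T : Set V, 2 ≤ ncomps G T →
    (ncomps G T : ℤ) - (T.ncard : ℤ) ≤ (ncomps G S : ℤ) - (S.ncard : ℤ)

/-- `S` is a maximal scattering set of `G`. -/
def IsMaxScatSet {V : Type*} (G : SimpleGraph V) (S : Set V) : Prop :=
  IsScatSet G S ∧ ∀ T : Set V, IsScatSet G T → S ⊆ T → S = T

/-- `G` is `t`-tough with respect to `S`. -/
def ToughWrt {V : Type*} (t : ℝ) (G : SimpleGraph V) (S : Set V) : Prop :=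
  ∀ W : Set V, 2 ≤ ncomps G W →
    (∀ c : (G.induce Sᶜ).ConnectedComponent,
      ∃ v : ↥Sᶜ, (G.induce Sᶜ).connectedComponentMk v = c ∧ (v : V) ∉ W) →
    t * (ncomps G W : ℝ) ≤ (W.ncard : ℝ)

/-!
Suppose the neighbourhoods of `x` and `y` in `D₁` are incomparable, witnessed by
`a ∈ N(x) \ N(y)` and `b ∈ N(y) \ N(x)`. Since `x` and `y` each have fewer than `n/(t+1)`
neighbours in `D₁ ∪ D₂`, each `Dᵢ` contains a vertex adjacent to neither; call them `c ∈ D₁` and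
`w ∈ D₂`. As `D₂` is connected and contains a neighbour of `x`, it has an edge `q w'` with `q`
adjacent to `x` (say) and `w'` adjacent to neither. Excluding induced copies of `P₄ ∪ P₁` then
forces the edges `ab`, `xy` and `ac`, after which `c a x y` together with `w'` is such a copy.
-/

lemma P4P1_adj_iff (i j : Fin 5) : P4P1.Adj i j ↔
    (i = 0 ∧ j = 1) ∨ (i = 1 ∧ j = 0) ∨ (i = 1 ∧ j = 2) ∨ (i = 2 ∧ j = 1) ∨
      (i = 2 ∧ j = 3) ∨ (i = 3 ∧ j = 2) := by
  simp only [P4P1, fromEdgeSet_adj, Set.mem_insert_iff, Set.mem_singleton_iff, Sym2.eq_iff]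
  fin_cases i <;> fin_cases j <;> simp

lemma P4P1Free.not_induced {V : Type*} {G : SimpleGraph V} (hfree : P4P1Free G)
    {v₀ v₁ v₂ v₃ v₄ : V} (h01 : G.Adj v₀ v₁) (h12 : G.Adj v₁ v₂) (h23 : G.Adj v₂ v₃)
    (h02 : ¬G.Adj v₀ v₂) (h03 : ¬G.Adj v₀ v₃) (h13 : ¬G.Adj v₁ v₃)
    (h04 : ¬G.Adj v₀ v₄) (h14 : ¬G.Adj v₁ v₄) (h24 : ¬G.Adj v₂ v₄) (h34 : ¬G.Adj v₃ v₄) :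
    False := by
  have h02' := mt G.adj_symm h02
  have h03' := mt G.adj_symm h03
  have h13' := mt G.adj_symm h13
  have h04' := mt G.adj_symm h04
  have h14' := mt G.adj_symm h14
  have h24' := mt G.adj_symm h24
  have h34' := mt G.adj_symm h34
  let f : Fin 5 → V := ![v₀, v₁, v₂, v₃, v₄]
  have hf : ∀ i j, G.Adj (f i) (f j) ↔ P4P1.Adj i j := by
    intro i j
    rw [P4P1_adj_iff]
    fin_cases i <;> fin_cases j <;>
      simp [f, h01, h12, h23, h01.symm, h12.symm, h23.symm, h02, h03, h13, h04, h14, h24, h34,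
        h02', h03', h13', h04', h14', h24', h34']
  have hinj : Function.Injective f := by
    intro i j hij
    fin_cases i <;> fin_cases j <;> simp_all [f]
  exact hfree.elim ⟨⟨f, hinj⟩, hf _ _⟩

section Components

variable {V : Type*} {G : SimpleGraph V} {s : Set V}

/-- `V(D)` for a component `D` of `G[s]`, as a set of vertices of `G`. -/
def componentVerts (c : (G.induce s).ConnectedComponent) : Set V :=
  {v | ∃ h : v ∈ s, (G.induce s).connectedComponentMk ⟨v, h⟩ = c}

lemma not_adj_of_mem_componentVerts {c c' : (G.induce s).ConnectedComponent} (hcc' : c ≠ c') :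
    ∀ u ∈ componentVerts c, ∀ v ∈ componentVerts c', ¬G.Adj u v := by
  rintro u ⟨hus, rfl⟩ v ⟨hvs, rfl⟩ huv
  exact hcc' (ConnectedComponent.sound (Adj.reachable (G := G.induce s) huv))

lemma exists_adj_of_mem_componentVerts {c : (G.induce s).ConnectedComponent} {N : Set V}
    {u w : V} (hu : u ∈ componentVerts c) (hw : w ∈ componentVerts c) (huN : u ∈ N)
    (hwN : w ∉ N) :
    ∃ q ∈ componentVerts c, ∃ q' ∈ componentVerts c, q ∈ N ∧ q' ∉ N ∧ G.Adj q q' := by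
  classical
  obtain ⟨hus, rfl⟩ := hu
  obtain ⟨hws, hwc⟩ := hw
  obtain ⟨p⟩ := ConnectedComponent.exact hwc.symm
  obtain ⟨d, hd, hdN, hdN'⟩ :=
    p.exists_boundary_dart (Subtype.val ⁻¹' N) huN hwN
  have hreach : (G.induce s).Reachable ⟨u, hus⟩ d.fst :=
    (p.takeUntil _ (p.dart_fst_mem_support_of_mem_darts hd)).reachable
  refine ⟨d.fst, ⟨d.fst.2, (ConnectedComponent.sound hreach).symm⟩, d.snd,
    ⟨d.snd.2, ?_⟩, hdN, hdN', d.adj⟩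
  exact (ConnectedComponent.sound (hreach.trans d.adj.reachable)).symm

end Components

lemma exists_mem_not_adj_of_ncard_lt {V : Type*} [Finite V] (G : SimpleGraph V) {x y : V}
    {A U : Set V} (hAU : A ⊆ U) {r : ℝ} (hx : ((G.neighborSet x ∩ U).ncard : ℝ) < r)
    (hy : ((G.neighborSet y ∩ U).ncard : ℝ) < r) (hA : 2 * r ≤ A.ncard) :
    ∃ c ∈ A, ¬G.Adj x c ∧ ¬G.Adj y c := by
  by_contra! hcov
  have hsub : A ⊆ (G.neighborSet x ∩ U) ∪ (G.neighborSet y ∩ U) := fun v hv =>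
    (em (G.Adj x v)).imp (⟨·, hAU hv⟩) (⟨hcov v hv ·, hAU hv⟩)
  have : A.ncard ≤ (G.neighborSet x ∩ U).ncard + (G.neighborSet y ∩ U).ncard :=
    (Set.ncard_le_ncard hsub).trans (Set.ncard_union_le _ _)
  have : (A.ncard : ℝ) ≤ (G.neighborSet x ∩ U).ncard + (G.neighborSet y ∩ U).ncard := by
    exact_mod_cast this
  linarith

lemma P4P1Free.not_adj_of_incomparable {V : Type*} {G : SimpleGraph V} (hfree : P4P1Free G)
    {A B : Set V} (hAB : ∀ u ∈ A, ∀ v ∈ B, ¬G.Adj u v) {x y a b c q w : V}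
    (ha : a ∈ A) (hxa : G.Adj x a) (hya : ¬G.Adj y a)
    (hb : b ∈ A) (hyb : G.Adj y b) (hxb : ¬G.Adj x b)
    (hc : c ∈ A) (hxc : ¬G.Adj x c) (hyc : ¬G.Adj y c)
    (hq : q ∈ B) (hxq : G.Adj x q) (hw : w ∈ B) (hxw : ¬G.Adj x w) (hyw : ¬G.Adj y w) :
    ¬G.Adj q w := by
  intro hqw
  have hBA : ∀ v ∈ B, ∀ u ∈ A, ¬G.Adj v u := fun v hv u hu h => hAB u hu v hv h.symm
  -- otherwise `w q x a` and `b` are an induced `P₄ ∪ P₁`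
  have hab : G.Adj a b := by
    by_contra hab
    exact hfree.not_induced hqw.symm hxq.symm hxa (mt G.adj_symm hxw) (hBA w hw a ha)
      (hBA q hq a ha) (hBA w hw b hb) (hBA q hq b hb) hxb hab
  -- otherwise `y b a x` and `w`
  have hxy : G.Adj x y := by
    by_contra hxy
    exact hfree.not_induced hyb hab.symm hxa.symm hya (mt G.adj_symm hxy) (mt G.adj_symm hxb)
      hyw (hAB b hb w hw) (hAB a ha w hw) hxw
  -- otherwise `a x q w` and `c`
  have hac : G.Adj a c := by
    by_contra hac
    exact hfree.not_induced hxa.symm hxq hqw (hAB a ha q hq) (hAB a ha w hw) hxw hac hxc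
      (hBA q hq c hc) (hBA w hw c hc)
  -- so `c a x y` and `w` are one
  exact hfree.not_induced hac.symm hxa.symm hxy (mt G.adj_symm hxc) (mt G.adj_symm hyc)
    (mt G.adj_symm hya) (hAB c hc w hw) (hAB a ha w hw) hxw hyw

theorem stmt19_general {V : Type*} [Fintype V] (G : SimpleGraph V) (t : ℝ)
    (hfree : P4P1Free G) (S : Set V)
    (c1 c2 : (G.induce Sᶜ).ConnectedComponent) (hcc : c1 ≠ c2)
    (A1 A2 : Set V)
    (hA1 : A1 = {v : V | ∃ h : v ∈ Sᶜ, (G.induce Sᶜ).connectedComponentMk ⟨v, h⟩ = c1})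
    (hA2 : A2 = {v : V | ∃ h : v ∈ Sᶜ, (G.induce Sᶜ).connectedComponentMk ⟨v, h⟩ = c2})
    (hbig1 : 2 * (Fintype.card V : ℝ) / (t + 1) ≤ (A1.ncard : ℝ))
    (hbig2 : 2 * (Fintype.card V : ℝ) / (t + 1) ≤ (A2.ncard : ℝ))
    (hnbr : ∀ x ∈ S, (∃ u ∈ A1, G.Adj x u) ∧ (∃ u ∈ A2, G.Adj x u))
    (S0 : Set V)
    (hS0 : S0 = {x : V | x ∈ S ∧
      ((G.neighborSet x ∩ (A1 ∪ A2)).ncard : ℝ) < (Fintype.card V : ℝ) / (t + 1)})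
    (x y : V) (hx : x ∈ S0) (hy : y ∈ S0) :
    G.neighborSet x ∩ A1 ⊆ G.neighborSet y ∩ A1 ∨
    G.neighborSet y ∩ A1 ⊆ G.neighborSet x ∩ A1 := by
  obtain rfl : A1 = componentVerts c1 := hA1
  obtain rfl : A2 = componentVerts c2 := hA2
  subst hS0
  obtain ⟨hxS, hxdeg⟩ := hx
  obtain ⟨-, hydeg⟩ := hy
  by_contra! hincomp
  simp only [Set.not_subset] at hincomp
  obtain ⟨⟨a, ⟨hxa, ha⟩, hya⟩, ⟨b, ⟨hyb, hb⟩, hxb⟩⟩ := hincomp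
  rw [mul_div_assoc] at hbig1 hbig2
  obtain ⟨c, hc, hxc, hyc⟩ :=
    exists_mem_not_adj_of_ncard_lt G Set.subset_union_left hxdeg hydeg hbig1
  obtain ⟨w, hw, hxw, hyw⟩ :=
    exists_mem_not_adj_of_ncard_lt G Set.subset_union_right hxdeg hydeg hbig2
  obtain ⟨-, u, hu, hxu⟩ := hnbr x hxS
  obtain ⟨q, hq, w', hw', hxyq, hxyw', hqw'⟩ :=
    exists_adj_of_mem_componentVerts (N := G.neighborSet x ∪ G.neighborSet y) hu hw
      (Or.inl hxu) (by simp [hxw, hyw])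
  simp only [Set.mem_union, mem_neighborSet, not_or] at hxyq hxyw'
  have hcross := not_adj_of_mem_componentVerts hcc
  rcases hxyq with hxq | hyq
  · exact hfree.not_adj_of_incomparable hcross ha hxa (fun h => hya ⟨h, ha⟩) hb hyb
      (fun h => hxb ⟨h, hb⟩) hc hxc hyc hq hxq hw' hxyw'.1 hxyw'.2 hqw'
  · exact hfree.not_adj_of_incomparable hcross hb hyb (fun h => hxb ⟨h, hb⟩) ha hxa
      (fun h => hya ⟨h, ha⟩) hc hyc hxc hq hyq hw' hxyw'.2 hxyw'.1 hqw'

theorem stmt19 {V : Type*} [Fintype V] (G : SimpleGraph V) (t : ℝ) (ht : 0 < t)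
    (hfree : P4P1Free G) (S : Set V) (hS : IsCutset G S)
    (c1 c2 : (G.induce Sᶜ).ConnectedComponent) (hcc : c1 ≠ c2)
    (hall : ∀ c : (G.induce Sᶜ).ConnectedComponent, c = c1 ∨ c = c2)
    (A1 A2 : Set V)
    (hA1 : A1 = {v : V | ∃ h : v ∈ Sᶜ, (G.induce Sᶜ).connectedComponentMk ⟨v, h⟩ = c1})
    (hA2 : A2 = {v : V | ∃ h : v ∈ Sᶜ, (G.induce Sᶜ).connectedComponentMk ⟨v, h⟩ = c2})
    (hbig1 : 2 * (Fintype.card V : ℝ) / (t + 1) ≤ (A1.ncard : ℝ))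
    (hbig2 : 2 * (Fintype.card V : ℝ) / (t + 1) ≤ (A2.ncard : ℝ))
    (hnbr : ∀ x ∈ S, (∃ u ∈ A1, G.Adj x u) ∧ (∃ u ∈ A2, G.Adj x u))
    (S0 : Set V)
    (hS0 : S0 = {x : V | x ∈ S ∧
      ((G.neighborSet x ∩ (A1 ∪ A2)).ncard : ℝ) < (Fintype.card V : ℝ) / (t + 1)})
    (x y : V) (hx : x ∈ S0) (hy : y ∈ S0) (hxy : x ≠ y) :
    G.neighborSet x ∩ A1 ⊆ G.neighborSet y ∩ A1 ∨
    G.neighborSet y ∩ A1 ⊆ G.neighborSet x ∩ A1 :=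
  stmt19_general G t hfree S c1 c2 hcc A1 A2 hA1 hA2 hbig1 hbig2 hnbr S0 hS0 x y hx hy
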